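/- (Proposition 3.) Let X ⊂ ℝ^{n_x} be a nonempty compact set, let x : [0,∞) → ℝ^{n_x} be differentiable with x'(t) = f(x(t)) and x(t) ∈ X for all t ≥ 0, let v : [0,∞) → ℝ^{n_y} satisfy ‖v(t)‖ ≤ v̄ for all t ≥ 0, and let ẑ : [0,∞) → ℝ^{n_z} be differentiable with ẑ'(t) = A ẑ(t) + B(h(x(t)) + v(t)) for all t ≥ 0. Let T̂ : ℝ^{n_x} → ℝ^{n_z} be continuously differentiable with PDE residual R and set R̄ := sup_{x∈X} ‖R(x)‖. Let Z ⊂ ℝ^{n_z} be a set containing T̂(X) and containing ẑ(t) for all t ≥ 0, let T̂* : ℝ^{n_z} → ℝ^{n_x} be Lipschitz with constant L ≥ 0 on Z, and define x̂(t) := T̂*(ẑ(t)) and E := sup_{x∈X} ‖T̂*(T̂(x)) − x‖, assumed finite. Let P, Q ∈ ℝ^{n_z×n_z} be symmetric positive definite with P A + Aᵀ P = −Q. Then limsup_{t→∞} ‖x̂(t) − x(t)‖ ≤ L·√(4·λ_max(P)/(λ_min(Q)·λ_min(P)))·( ‖Q^{−1/2}P‖·R̄ + ‖Q^{−1/2}P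 B‖·v̄ ) + E. -/

import Mathlib

open Filter Matrix

/-- Euclidean space `ℝ^n`. -/
abbrev E (n : ℕ) := EuclideanSpace ℝ (Fin n)

/-- Smallest eigenvalue of a (Hermitian) real matrix. -/
noncomputable def lamMin {n : ℕ} (M : Matrix (Fin n) (Fin n) ℝ) : ℝ :=
  if h : M.IsHermitian then ⨅ i, h.eigenvalues i else 0

/-- Largest eigenvalue of a (Hermitian) real matrix. -/
noncomputable def lamMax {n : ℕ} (M : Matrix (Fin n) (Fin n) ℝ) : ℝ :=
  if h : M.IsHermitian then ⨆ i, h.eigenvalues i else 0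

open scoped Classical in
/-- The positive semidefinite square root `M^{1/2}` of a positive semidefinite matrix. -/
noncomputable def matSqrt {n : ℕ} (M : Matrix (Fin n) (Fin n) ℝ) : Matrix (Fin n) (Fin n) ℝ :=
  if h : M.PosSemidef then
    h.1.eigenvectorUnitary.1 * diagonal (fun i => Real.sqrt (h.1.eigenvalues i)) *
      (star h.1.eigenvectorUnitary : Matrix (Fin n) (Fin n) ℝ)
  else 0

/-- `M^{-1/2} := (M^{1/2})⁻¹`. -/
noncomputable def invSqrt {n : ℕ} (M : Matrix (Fin n) (Fin n) ℝ) : Matrix (Fin n) (Fin n) ℝ :=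
  (matSqrt M)⁻¹

/-- Operator norm of a matrix induced by the Euclidean norms. -/
noncomputable def opNorm {m n : ℕ} (M : Matrix (Fin m) (Fin n) ℝ) : ℝ :=
  ‖LinearMap.toContinuousLinearMap (Matrix.toEuclideanLin M)‖

/-- Matrix-vector multiplication as a map between Euclidean spaces. -/
def mv {m n : ℕ} (M : Matrix (Fin m) (Fin n) ℝ) (v : E n) : E m := WithLp.toLp 2 (M.mulVec v)

/-!
The estimation error `e = ẑ - T̂ ∘ x` solves `e' = A e + w` with `w = B v - R(x)`, and
`‖Q^{-1/2} P w‖ ≤ c := ‖Q^{-1/2} P‖ R̄ + ‖Q^{-1/2} P B‖ v̄`. Writing `P = Q^{1/2} (Q^{-1/2} P)` and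
using the Lyapunov equation, the function `V = ⟪P e, e⟫` satisfies `V' ≤ -s² + 2 s c` with
`s = ‖Q^{1/2} e‖ ≥ √λ_min(Q) ‖e‖`.
Hence, for every `r > √(4 λ_max(P) / (λ_min(Q) λ_min(P))) c`, `V` decreases at a uniform rate
as long as `V ≥ λ_min(P) r²`, so eventually `V ≤ λ_min(P) r²` and `‖e‖ ≤ r`. Finally
`‖T̂*(ẑ) - x‖ ≤ L ‖e‖ + E`, by the triangle inequality through `T̂*(T̂(x))`.
-/

open scoped RealInnerProductSpace

noncomputable def mvCLM {m n : ℕ} (M : Matrix (Fin m) (Fin n) ℝ) : E n →L[ℝ] E m :=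
  LinearMap.toContinuousLinearMap (Matrix.toEuclideanLin M)

section MatrixVector

variable {m n k : ℕ}

lemma opNorm_nonneg (M : Matrix (Fin m) (Fin n) ℝ) : 0 ≤ opNorm M := norm_nonneg _

lemma norm_mv_le (M : Matrix (Fin m) (Fin n) ℝ) (u : E n) : ‖mv M u‖ ≤ opNorm M * ‖u‖ :=
  (mvCLM M).le_opNorm u

lemma mv_add (M : Matrix (Fin m) (Fin n) ℝ) (u w : E n) : mv M (u + w) = mv M u + mv M w :=
  map_add (mvCLM M) u w

lemma mv_sub (M : Matrix (Fin m) (Fin n) ℝ) (u w : E n) : mv M (u - w) = mv M u - mv M w :=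
  map_sub (mvCLM M) u w

lemma mv_mul (M : Matrix (Fin m) (Fin n) ℝ) (N : Matrix (Fin n) (Fin k) ℝ) (u : E k) :
    mv (M * N) u = mv M (mv N u) := by
  simp only [mv, WithLp.ofLp_toLp, Matrix.mulVec_mulVec]

lemma add_mv (M N : Matrix (Fin m) (Fin n) ℝ) (u : E n) : mv (M + N) u = mv M u + mv N u := by
  simp only [mv, Matrix.add_mulVec, WithLp.toLp_add]

lemma neg_mv (M : Matrix (Fin m) (Fin n) ℝ) (u : E n) : mv (-M) u = -mv M u := by
  simp only [mv, Matrix.neg_mulVec, WithLp.toLp_neg]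

lemma norm_mv_mv_sub_le (M : Matrix (Fin m) (Fin n) ℝ) (N : Matrix (Fin n) (Fin k) ℝ)
    {u : E k} {w : E n} {α β : ℝ} (hu : ‖u‖ ≤ α) (hw : ‖w‖ ≤ β) :
    ‖mv M (mv N u - w)‖ ≤ opNorm M * β + opNorm (M * N) * α :=
  calc ‖mv M (mv N u - w)‖ ≤ ‖mv (M * N) u‖ + ‖mv M w‖ := by
        rw [mv_sub, ← mv_mul]; exact norm_sub_le _ _
    _ ≤ opNorm (M * N) * α + opNorm M * β := add_le_add
        ((norm_mv_le _ _).trans (mul_le_mul_of_nonneg_left hu (opNorm_nonneg _)))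
        ((norm_mv_le _ _).trans (mul_le_mul_of_nonneg_left hw (opNorm_nonneg _)))
    _ = opNorm M * β + opNorm (M * N) * α := add_comm _ _

lemma inner_mv_left (M : Matrix (Fin m) (Fin n) ℝ) (u : E n) (w : E m) :
    ⟪mv M u, w⟫ = ⟪u, mv Mᵀ w⟫ := by
  simp only [EuclideanSpace.inner_eq_star_dotProduct, mv, star_trivial]
  rw [Matrix.dotProduct_mulVec, ← Matrix.vecMul_transpose, Matrix.transpose_transpose]

lemma inner_mv_left_of_isSymm {M : Matrix (Fin n) (Fin n) ℝ} (hM : M.IsSymm) (u w : E n) :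
    ⟪mv M u, w⟫ = ⟪u, mv M w⟫ := by
  rw [inner_mv_left, hM.eq]

end MatrixVector

section Spectral

variable {n : ℕ} {M : Matrix (Fin n) (Fin n) ℝ}

lemma Matrix.IsHermitian.inner_mv_self_eq_sum (hM : M.IsHermitian) (u : E n) :
    ⟪mv M u, u⟫ = ∑ i, hM.eigenvalues i * ⟪u, hM.eigenvectorBasis i⟫ ^ 2 := by
  rw [← hM.eigenvectorBasis.sum_inner_mul_inner (mv M u) u]
  refine Finset.sum_congr rfl fun i _ => ?_
  have hvec : mv M (hM.eigenvectorBasis i) = hM.eigenvalues i • hM.eigenvectorBasis i := by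
    simp only [mv, hM.mulVec_eigenvectorBasis i]; rfl
  rw [inner_mv_left_of_isSymm (isHermitian_iff_isSymm.1 hM), hvec, real_inner_smul_right,
    real_inner_comm (hM.eigenvectorBasis i) u]
  ring

lemma Matrix.IsHermitian.norm_sq_eq_sum (hM : M.IsHermitian) (u : E n) :
    ‖u‖ ^ 2 = ∑ i, ⟪u, hM.eigenvectorBasis i⟫ ^ 2 := by
  rw [← real_inner_self_eq_norm_sq, ← hM.eigenvectorBasis.sum_inner_mul_inner u u]
  refine Finset.sum_congr rfl fun i _ => ?_
  rw [real_inner_comm (hM.eigenvectorBasis i) u, sq]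

lemma lamMin_mul_norm_sq_le (hM : M.IsHermitian) (u : E n) :
    lamMin M * ‖u‖ ^ 2 ≤ ⟪mv M u, u⟫ := by
  rw [hM.inner_mv_self_eq_sum, hM.norm_sq_eq_sum, lamMin, dif_pos hM, Finset.mul_sum]
  exact Finset.sum_le_sum fun i _ => mul_le_mul_of_nonneg_right
    (ciInf_le (Set.finite_range _).bddBelow i) (sq_nonneg _)

lemma inner_le_lamMax_mul_norm_sq (hM : M.IsHermitian) (u : E n) :
    ⟪mv M u, u⟫ ≤ lamMax M * ‖u‖ ^ 2 := by
  rw [hM.inner_mv_self_eq_sum, hM.norm_sq_eq_sum, lamMax, dif_pos hM, Finset.mul_sum]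
  exact Finset.sum_le_sum fun i _ => mul_le_mul_of_nonneg_right
    (le_ciSup (Set.finite_range _).bddAbove i) (sq_nonneg _)

variable [NeZero n]

lemma lamMin_pos (hM : M.PosDef) : 0 < lamMin M := by
  rw [lamMin, dif_pos hM.1]
  obtain ⟨i, hi⟩ := Finite.exists_min hM.1.eigenvalues
  exact (hM.eigenvalues_pos i).trans_le (le_ciInf hi)

lemma lamMax_pos (hM : M.PosDef) : 0 < lamMax M := by
  rw [lamMax, dif_pos hM.1]
  exact (hM.eigenvalues_pos 0).trans_le (le_ciSup (Set.finite_range _).bddAbove 0)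

end Spectral

section SquareRoot

variable {n : ℕ} {Q : Matrix (Fin n) (Fin n) ℝ}

lemma isSymm_matSqrt (hQ : Q.PosDef) : (matSqrt Q).IsSymm := by
  rw [matSqrt, dif_pos hQ.posSemidef]
  simp [IsSymm, Matrix.transpose_mul, Matrix.mul_assoc, Matrix.star_eq_conjTranspose]

lemma matSqrt_mul_self (hQ : Q.PosDef) : matSqrt Q * matSqrt Q = Q := by
  rw [matSqrt, dif_pos hQ.posSemidef]
  have hs := hQ.posSemidef.1.spectral_theorem
  rw [Unitary.conjStarAlgAut_apply] at hs
  conv_rhs => rw [hs]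
  have hU := Unitary.coe_star_mul_self hQ.posSemidef.1.eigenvectorUnitary
  simp only [Matrix.mul_assoc]
  rw [← Matrix.mul_assoc (star _ : Matrix (Fin n) (Fin n) ℝ) _, hU, Matrix.one_mul,
    ← Matrix.mul_assoc (diagonal _), diagonal_mul_diagonal]
  congr 3
  funext i
  simp [Real.mul_self_sqrt (hQ.posSemidef.eigenvalues_nonneg i)]

lemma matSqrt_mul_invSqrt (hQ : Q.PosDef) : matSqrt Q * invSqrt Q = 1 := by
  refine Matrix.mul_nonsing_inv _ (isUnit_iff_ne_zero.2 fun h0 => hQ.det_pos.ne' ?_)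
  rw [← matSqrt_mul_self hQ, Matrix.det_mul, h0, mul_zero]

lemma inner_mv_self_eq_norm_mv_matSqrt_sq (hQ : Q.PosDef) (u : E n) :
    ⟪mv Q u, u⟫ = ‖mv (matSqrt Q) u‖ ^ 2 := by
  conv_lhs => rw [← matSqrt_mul_self hQ]
  rw [mv_mul, inner_mv_left_of_isSymm (isSymm_matSqrt hQ), real_inner_self_eq_norm_sq]

end SquareRoot

section Lyapunov

variable {n : ℕ} {A P Q : Matrix (Fin n) (Fin n) ℝ}

lemma hasDerivAt_inner_mv_self (hP : P.IsSymm) {e : ℝ → E n} {e' : E n} {t : ℝ}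
    (he : HasDerivAt e e' t) :
    HasDerivAt (fun τ => ⟪mv P (e τ), e τ⟫) (2 * ⟪mv P (e t), e'⟫) t := by
  have hPe : HasDerivAt (fun τ => mv P (e τ)) (mv P e') t :=
    (mvCLM P).hasFDerivAt.comp_hasDerivAt t he
  refine (hPe.inner ℝ he).congr_deriv ?_
  rw [inner_mv_left_of_isSymm hP e' (e t), real_inner_comm (mv P (e t)) e']
  ring

lemma two_inner_mv_eq_neg_norm_mv_matSqrt_sq (hP : P.IsSymm) (hQ : Q.PosDef)
    (hLyap : P * A + Aᵀ * P = -Q) (u : E n) :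
    2 * ⟪mv P u, mv A u⟫ = -‖mv (matSqrt Q) u‖ ^ 2 := by
  have hPA : ⟪mv (P * A) u, u⟫ = ⟪mv P u, mv A u⟫ := by
    rw [mv_mul, inner_mv_left_of_isSymm hP, real_inner_comm]
  have hAP : ⟪mv (Aᵀ * P) u, u⟫ = ⟪mv P u, mv A u⟫ := by
    rw [mv_mul, inner_mv_left, transpose_transpose]
  have hQ' : Q = -(P * A + Aᵀ * P) := by rw [hLyap, neg_neg]
  rw [← inner_mv_self_eq_norm_mv_matSqrt_sq hQ, hQ', neg_mv, inner_neg_left, neg_neg, add_mv,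
    inner_add_left, hPA, hAP]
  ring

lemma inner_mv_le_norm_mv_matSqrt_mul_norm (hP : P.IsSymm) (hQ : Q.PosDef) (u w : E n) :
    ⟪mv P u, w⟫ ≤ ‖mv (matSqrt Q) u‖ * ‖mv (invSqrt Q * P) w‖ := by
  have hfac : P = matSqrt Q * (invSqrt Q * P) := by
    rw [← Matrix.mul_assoc, matSqrt_mul_invSqrt hQ, Matrix.one_mul]
  calc ⟪mv P u, w⟫ = ⟪u, mv P w⟫ := inner_mv_left_of_isSymm hP u w
    _ = ⟪mv (matSqrt Q) u, mv (invSqrt Q * P) w⟫ := by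
      rw [inner_mv_left_of_isSymm (isSymm_matSqrt hQ), ← mv_mul, ← hfac]
    _ ≤ _ := real_inner_le_norm _ _

lemma two_inner_mv_add_le (hP : P.IsSymm) (hQ : Q.PosDef) (hLyap : P * A + Aᵀ * P = -Q)
    (u w : E n) :
    2 * ⟪mv P u, mv A u + w⟫ ≤
      -‖mv (matSqrt Q) u‖ ^ 2 + 2 * (‖mv (matSqrt Q) u‖ * ‖mv (invSqrt Q * P) w‖) := by
  rw [inner_add_right, mul_add, two_inner_mv_eq_neg_norm_mv_matSqrt_sq hP hQ hLyap]
  linarith [inner_mv_le_norm_mv_matSqrt_mul_norm hP hQ u w]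

end Lyapunov

section Comparison

variable {V V' : ℝ → ℝ} {K δ : ℝ}

lemma le_of_le_of_hasDerivAt_neg (hV : ∀ t ≥ (0 : ℝ), HasDerivAt V (V' t) t)
    (hd : ∀ t ≥ (0 : ℝ), K ≤ V t → V' t < 0) {t₀ t : ℝ} (ht₀ : 0 ≤ t₀) (hVt₀ : V t₀ ≤ K)
    (ht : t₀ ≤ t) : V t ≤ K :=
  image_le_of_deriv_right_lt_deriv_boundary' (B := fun _ => K) (B' := fun _ => 0)
    (fun s hs => (hV s (ht₀.trans hs.1)).continuousAt.continuousWithinAt)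
    (fun s hs => (hV s (ht₀.trans hs.1)).hasDerivWithinAt)
    hVt₀ continuousOn_const (fun _ _ => hasDerivWithinAt_const _ _ _)
    (fun s hs hVs => hd s (ht₀.trans hs.1) hVs.ge) ⟨ht, le_rfl⟩

lemma exists_le_of_hasDerivAt_le_neg (hV : ∀ t ≥ (0 : ℝ), HasDerivAt V (V' t) t) (hδ : 0 < δ)
    (hd : ∀ t ≥ (0 : ℝ), K ≤ V t → V' t ≤ -δ) : ∃ t₀ ≥ (0 : ℝ), V t₀ ≤ K := by
  by_contra! hgt
  set b := (V 0 - K) / δ + 1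
  have hb : 0 < b := by
    have : 0 < (V 0 - K) / δ := div_pos (by linarith [hgt 0 le_rfl]) hδ
    linarith
  obtain ⟨s, hs, hslope⟩ := exists_hasDerivAt_eq_slope V V' hb
    (fun s hs => (hV s hs.1).continuousAt.continuousWithinAt) (fun s hs => hV s hs.1.le)
  have hdecay := hd s hs.1.le (hgt s hs.1.le).le
  rw [hslope, sub_zero, div_le_iff₀ hb] at hdecay
  have hδb : δ * b = V 0 - K + δ := by simp only [b]; field_simp
  linarith [hgt b hb.le]

lemma eventually_le_of_hasDerivAt_le_neg (hV : ∀ t ≥ (0 : ℝ), HasDerivAt V (V' t) t)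
    (hδ : 0 < δ) (hd : ∀ t ≥ (0 : ℝ), K ≤ V t → V' t ≤ -δ) : ∀ᶠ t in atTop, V t ≤ K := by
  obtain ⟨t₀, ht₀, hVt₀⟩ := exists_le_of_hasDerivAt_le_neg hV hδ hd
  filter_upwards [eventually_ge_atTop t₀] with t ht
  exact le_of_le_of_hasDerivAt_neg hV (fun s hs hKs => (hd s hs hKs).trans_lt (by linarith))
    ht₀ hVt₀ ht

end Comparison

lemma two_mul_lt_sqrt_of_sqrt_mul_lt {n : ℕ} [NeZero n] {P Q : Matrix (Fin n) (Fin n) ℝ}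
    (hP : P.PosDef) (hQ : Q.PosDef) {c r : ℝ} (hc : 0 ≤ c)
    (hr : √(4 * lamMax P / (lamMin Q * lamMin P)) * c < r) :
    2 * c < √(lamMin Q * (lamMin P * r ^ 2) / lamMax P) := by
  have hlP := lamMin_pos hP
  have hlQ := lamMin_pos hQ
  have hΛP := lamMax_pos hP
  have hsq : 4 * lamMax P / (lamMin Q * lamMin P) * c ^ 2 < r ^ 2 := by
    have := pow_lt_pow_left₀ hr (by positivity) two_ne_zero
    rwa [mul_pow, Real.sq_sqrt (by positivity)] at this
  rw [div_mul_eq_mul_div, div_lt_iff₀ (by positivity)] at hsq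
  rw [Real.lt_sqrt (by positivity), lt_div_iff₀ hΛP]
  linarith

theorem eventually_norm_le_of_lyapunov {n : ℕ} {A P Q : Matrix (Fin n) (Fin n) ℝ}
    (hP : P.PosDef) (hQ : Q.PosDef) (hLyap : P * A + Aᵀ * P = -Q) {e w : ℝ → E n}
    (he : ∀ t ≥ (0 : ℝ), HasDerivAt e (mv A (e t) + w t) t) {c : ℝ}
    (hw : ∀ t ≥ (0 : ℝ), ‖mv (invSqrt Q * P) (w t)‖ ≤ c) {r : ℝ}
    (hr : √(4 * lamMax P / (lamMin Q * lamMin P)) * c < r) :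
    ∀ᶠ t in atTop, ‖e t‖ ≤ r := by
  have hc : 0 ≤ c := (norm_nonneg _).trans (hw 0 le_rfl)
  have hr0 : 0 ≤ r := (mul_nonneg (Real.sqrt_nonneg _) hc).trans hr.le
  rcases eq_zero_or_neZero n with rfl | _
  · exact Eventually.of_forall fun t => by simpa [Subsingleton.elim (e t) 0] using hr0
  have hlP := lamMin_pos hP
  have hlQ := lamMin_pos hQ
  have hΛP := lamMax_pos hP
  have hPt := isHermitian_iff_isSymm.1 hP.1
  set u₀ := √(lamMin Q * (lamMin P * r ^ 2) / lamMax P)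
  have hu₀ : 2 * c < u₀ := two_mul_lt_sqrt_of_sqrt_mul_lt hP hQ hc hr
  have hδ : 0 < u₀ ^ 2 - 2 * c * u₀ := by nlinarith
  have hV := eventually_le_of_hasDerivAt_le_neg (K := lamMin P * r ^ 2)
    (fun t ht => hasDerivAt_inner_mv_self hPt (he t ht)) hδ ?_
  · filter_upwards [hV] with t hVt
    have hnorm : ‖e t‖ ^ 2 ≤ r ^ 2 :=
      le_of_mul_le_mul_left ((lamMin_mul_norm_sq_le hP.1 (e t)).trans hVt) hlP
    exact (sq_le_sq₀ (norm_nonneg _) hr0).1 hnorm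
  intro t ht hKV
  set s := ‖mv (matSqrt Q) (e t)‖
  have hs : u₀ ≤ s := by
    have hQe := lamMin_mul_norm_sq_le hQ.1 (e t)
    rw [inner_mv_self_eq_norm_mv_matSqrt_sq hQ] at hQe
    rw [Real.sqrt_le_iff, div_le_iff₀ hΛP]
    refine ⟨norm_nonneg _, ?_⟩
    nlinarith [mul_le_mul_of_nonneg_left (hKV.trans (inner_le_lamMax_mul_norm_sq hP.1 (e t)))
      hlQ.le, mul_le_mul_of_nonneg_left hQe hΛP.le]
  calc 2 * ⟪mv P (e t), mv A (e t) + w t⟫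
      ≤ -s ^ 2 + 2 * (s * ‖mv (invSqrt Q * P) (w t)‖) := two_inner_mv_add_le hPt hQ hLyap _ _
    _ ≤ -s ^ 2 + 2 * (s * c) := by gcongr; exact hw t ht
    _ ≤ -(u₀ ^ 2 - 2 * c * u₀) := by
      nlinarith [mul_nonneg (sub_nonneg.2 hs) (by linarith : (0 : ℝ) ≤ s + u₀ - 2 * c)]

lemma limsup_le_of_forall_gt {α : Type*} {l : Filter α} {u : α → ℝ}
    (hu : IsCoboundedUnder (· ≤ ·) l u) {g : ℝ → ℝ} {a : ℝ} (hg : ContinuousAt g a)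
    (h : ∀ r > a, ∀ᶠ t in l, u t ≤ g r) : limsup u l ≤ g a :=
  ge_of_tendsto (hg.tendsto.mono_left nhdsWithin_le_nhds)
    (eventually_nhdsWithin_of_forall (s := Set.Ioi a) fun r hr => limsup_le_of_le hu (h r hr))

lemma hasDerivAt_sub_comp_of_residual {nx ny nz : ℕ} {f : E nx → E nx} {h : E nx → E ny}
    {A : Matrix (Fin nz) (Fin nz) ℝ} {B : Matrix (Fin nz) (Fin ny) ℝ} {T R : E nx → E nz}
    (hR : ∀ p, R p = fderiv ℝ T p (f p) - mv A (T p) - mv B (h p))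
    {x : ℝ → E nx} {zh : ℝ → E nz} {v : ℝ → E ny} {t : ℝ} (hT : DifferentiableAt ℝ T (x t))
    (hx : HasDerivAt x (f (x t)) t)
    (hz : HasDerivAt zh (mv A (zh t) + mv B (h (x t) + v t)) t) :
    HasDerivAt (fun τ => zh τ - T (x τ)) (mv A (zh t - T (x t)) + (mv B (v t) - R (x t))) t := by
  refine (hz.sub (hT.hasFDerivAt.comp_hasDerivAt t hx)).congr_deriv ?_
  rw [hR, mv_sub, mv_add]
  abel

theorem stmt12_general {nx ny nz : ℕ}
    (f : E nx → E nx) (hf : Continuous f)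
    (h : E nx → E ny) (hh : Continuous h)
    (A : Matrix (Fin nz) (Fin nz) ℝ) (B : Matrix (Fin nz) (Fin ny) ℝ)
    (X : Set (E nx)) (hXc : IsCompact X)
    (x : ℝ → E nx) (hx : ∀ t ≥ (0:ℝ), HasDerivAt x (f (x t)) t)
    (hxX : ∀ t ≥ (0:ℝ), x t ∈ X)
    (vbar : ℝ)
    (v : ℝ → E ny) (hv : ∀ t ≥ (0:ℝ), ‖v t‖ ≤ vbar)
    (zh : ℝ → E nz)
    (hz : ∀ t ≥ (0:ℝ), HasDerivAt zh (mv A (zh t) + mv B (h (x t) + v t)) t)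
    (T : E nx → E nz) (hT : ContDiff ℝ 1 T)
    (R : E nx → E nz)
    (hR : ∀ p, R p = fderiv ℝ T p (f p) - mv A (T p) - mv B (h p))
    (Rbar : ℝ) (hRbar : Rbar = sSup ((fun p => ‖R p‖) '' X))
    (Z : Set (E nz)) (hTZ : T '' X ⊆ Z) (hzZ : ∀ t ≥ (0:ℝ), zh t ∈ Z)
    (Ts : E nz → E nx) (L : ℝ) (hL : 0 ≤ L)
    (hLip : ∀ z₁ ∈ Z, ∀ z₂ ∈ Z, ‖Ts z₁ - Ts z₂‖ ≤ L * ‖z₁ - z₂‖)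
    (Err : ℝ) (hErr : Err = sSup ((fun p => ‖Ts (T p) - p‖) '' X))
    (hbdd : BddAbove ((fun p => ‖Ts (T p) - p‖) '' X))
    (P Q : Matrix (Fin nz) (Fin nz) ℝ) (hP : P.PosDef) (hQ : Q.PosDef)
    (hLyap : P * A + Aᵀ * P = -Q) :
    limsup (fun t => ‖Ts (zh t) - x t‖) atTop ≤
      L * Real.sqrt (4 * lamMax P / (lamMin Q * lamMin P)) *
          (opNorm (invSqrt Q * P) * Rbar + opNorm (invSqrt Q * P * B) * vbar)
        + Err := by
  have hRcont : Continuous R := by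
    rw [show R = _ from funext hR]
    exact (((hT.continuous_fderiv one_ne_zero).clm_apply hf).sub
      ((mvCLM A).continuous.comp hT.continuous)).sub ((mvCLM B).continuous.comp hh)
  have hRle : ∀ p ∈ X, ‖R p‖ ≤ Rbar := fun p hp =>
    hRbar ▸ le_csSup (hXc.image hRcont.norm).bddAbove (Set.mem_image_of_mem _ hp)
  have hw : ∀ t ≥ (0 : ℝ), ‖mv (invSqrt Q * P) (mv B (v t) - R (x t))‖ ≤
      opNorm (invSqrt Q * P) * Rbar + opNorm (invSqrt Q * P * B) * vbar := fun t ht =>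
    norm_mv_mv_sub_le _ _ (hv t ht) (hRle _ (hxX t ht))
  have hobs : ∀ t ≥ (0 : ℝ), ‖Ts (zh t) - x t‖ ≤ L * ‖zh t - T (x t)‖ + Err := fun t ht =>
    calc ‖Ts (zh t) - x t‖ ≤ ‖Ts (zh t) - Ts (T (x t))‖ + ‖Ts (T (x t)) - x t‖ :=
          norm_sub_le_norm_sub_add_norm_sub _ _ _
      _ ≤ L * ‖zh t - T (x t)‖ + Err := add_le_add
          (hLip _ (hzZ t ht) _ (hTZ (Set.mem_image_of_mem T (hxX t ht))))
          (hErr ▸ le_csSup hbdd (Set.mem_image_of_mem _ (hxX t ht)))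
  rw [mul_assoc]
  refine limsup_le_of_forall_gt (isCoboundedUnder_le_of_le atTop fun t => norm_nonneg _)
    (g := fun r => L * r + Err) (by fun_prop) fun r hr => ?_
  have herr : ∀ t ≥ (0 : ℝ), HasDerivAt (fun τ => zh τ - T (x τ))
      (mv A (zh t - T (x t)) + (mv B (v t) - R (x t))) t := fun t ht =>
    hasDerivAt_sub_comp_of_residual hR ((hT.differentiable one_ne_zero) _) (hx t ht) (hz t ht)
  have he := eventually_norm_le_of_lyapunov hP hQ hLyap herr hw hr
  filter_upwards [he, eventually_ge_atTop 0] with t het ht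
  exact (hobs t ht).trans (by gcongr)

theorem stmt12 {nx ny nz : ℕ}
    (f : E nx → E nx) (hf : Continuous f)
    (h : E nx → E ny) (hh : Continuous h)
    (A : Matrix (Fin nz) (Fin nz) ℝ) (B : Matrix (Fin nz) (Fin ny) ℝ)
    (X : Set (E nx)) (hXne : X.Nonempty) (hXc : IsCompact X)
    (x : ℝ → E nx) (hx : ∀ t ≥ (0:ℝ), HasDerivAt x (f (x t)) t)
    (hxX : ∀ t ≥ (0:ℝ), x t ∈ X)
    (vbar : ℝ) (hvbar : 0 ≤ vbar)
    (v : ℝ → E ny) (hv : ∀ t ≥ (0:ℝ), ‖v t‖ ≤ vbar)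
    (zh : ℝ → E nz)
    (hz : ∀ t ≥ (0:ℝ), HasDerivAt zh (mv A (zh t) + mv B (h (x t) + v t)) t)
    (T : E nx → E nz) (hT : ContDiff ℝ 1 T)
    (R : E nx → E nz)
    (hR : ∀ p, R p = fderiv ℝ T p (f p) - mv A (T p) - mv B (h p))
    (Rbar : ℝ) (hRbar : Rbar = sSup ((fun p => ‖R p‖) '' X))
    (Z : Set (E nz)) (hTZ : T '' X ⊆ Z) (hzZ : ∀ t ≥ (0:ℝ), zh t ∈ Z)
    (Ts : E nz → E nx) (L : ℝ) (hL : 0 ≤ L)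
    (hLip : ∀ z₁ ∈ Z, ∀ z₂ ∈ Z, ‖Ts z₁ - Ts z₂‖ ≤ L * ‖z₁ - z₂‖)
    (Err : ℝ) (hErr : Err = sSup ((fun p => ‖Ts (T p) - p‖) '' X))
    (hbdd : BddAbove ((fun p => ‖Ts (T p) - p‖) '' X))
    (P Q : Matrix (Fin nz) (Fin nz) ℝ) (hP : P.PosDef) (hQ : Q.PosDef)
    (hLyap : P * A + Aᵀ * P = -Q) :
    limsup (fun t => ‖Ts (zh t) - x t‖) atTop ≤
      L * Real.sqrt (4 * lamMax P / (lamMin Q * lamMin P)) *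
          (opNorm (invSqrt Q * P) * Rbar + opNorm (invSqrt Q * P * B) * vbar)
        + Err :=
  stmt12_general f hf h hh A B X hXc x hx hxX vbar v hv zh hz T hT R hR Rbar hRbar Z hTZ hzZ Ts L hL
    hLip Err hErr hbdd P Q hP hQ hLyap
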